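/- For semicopulas S₁, S₂, S₃, the inequality I_{S₁}(μ, (f+a)·1_A) ≤ I_{S₂}(μ, f·1_A) + I_{S₃}(μ, a·1_A) holds for all a ∈ [0,1], all measurable sets A, all capacities μ, and all measurable f : X → [0,1] with f + a ∈ [0,1], if and only if S₁(x+y, z) ≤ S₂(x, z) + S₃(y, z) for all x, y, z ∈ [0,1] with x + y ≤ 1. -/

import Mathlib

open Set

def Semicopula (S : ℝ → ℝ → ℝ) : Prop :=
  (∀ x ∈ Icc (0:ℝ) 1, ∀ y ∈ Icc (0:ℝ) 1, S x y ∈ Icc (0:ℝ) 1) ∧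
  (∀ x ∈ Icc (0:ℝ) 1, ∀ y ∈ Icc (0:ℝ) 1, ∀ y' ∈ Icc (0:ℝ) 1, y ≤ y' → S x y ≤ S x y') ∧
  (∀ y ∈ Icc (0:ℝ) 1, ∀ x ∈ Icc (0:ℝ) 1, ∀ x' ∈ Icc (0:ℝ) 1, x ≤ x' → S x y ≤ S x' y) ∧
  (∀ x ∈ Icc (0:ℝ) 1, S x 1 = x ∧ S 1 x = x)

def Capacity {X : Type} (μ : Set X → ℝ) : Prop :=
  (∀ A : Set X, μ A ∈ Icc (0:ℝ) 1) ∧ (∀ A B : Set X, A ⊆ B → μ A ≤ μ B) ∧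
  μ (∅ : Set X) = 0 ∧ μ (univ : Set X) = 1

noncomputable def genInt {X : Type} (S : ℝ → ℝ → ℝ) (μ : Set X → ℝ) (f : X → ℝ) : ℝ :=
  ⨆ t : Icc (0:ℝ) 1, S (t:ℝ) (μ {x | (t:ℝ) ≤ f x})

def Comonotone {X : Type} (f g : X → ℝ) : Prop :=
  ∀ x y, 0 ≤ (f x - f y) * (g x - g y)

def Tcoseminorm (op : ℝ → ℝ → ℝ) : Prop :=
  ∃ S : ℝ → ℝ → ℝ, Semicopula S ∧
    ∀ x ∈ Icc (0:ℝ) 1, ∀ y ∈ Icc (0:ℝ) 1, op x y = 1 - S (1 - x) (1 - y)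

/-! On a constant indicator the integral is explicit, `I_S(μ, c·1_A) = S(c, μ A)`, so testing the
integral inequality with constant `f` and a capacity giving `A` the value `z` yields the pointwise
inequality. Conversely, at a level `t` of `(f + a)·1_A` split `t = (t - min t a) + min t a`: the
level set at `t` lies in the level set of `f·1_A` at `t - min t a` and in that of `a·1_A` at
`min t a`, so the pointwise inequality and monotonicity of `S₂, S₃` bound each term of the
supremum. -/

namespace Semicopula

variable {S : ℝ → ℝ → ℝ}

lemma mem_Icc (hS : Semicopula S) {x y : ℝ} (hx : x ∈ Icc (0:ℝ) 1) (hy : y ∈ Icc (0:ℝ) 1) :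
    S x y ∈ Icc (0:ℝ) 1 :=
  hS.1 x hx y hy

lemma mono_left (hS : Semicopula S) {x x' y : ℝ} (hx : x ∈ Icc (0:ℝ) 1) (hx' : x' ∈ Icc (0:ℝ) 1)
    (hy : y ∈ Icc (0:ℝ) 1) (hxx' : x ≤ x') : S x y ≤ S x' y :=
  hS.2.2.1 y hy x hx x' hx' hxx'

lemma mono_right (hS : Semicopula S) {x y y' : ℝ} (hx : x ∈ Icc (0:ℝ) 1) (hy : y ∈ Icc (0:ℝ) 1)
    (hy' : y' ∈ Icc (0:ℝ) 1) (hyy' : y ≤ y') : S x y ≤ S x y' :=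
  hS.2.1 x hx y hy y' hy' hyy'

lemma zero_left (hS : Semicopula S) {y : ℝ} (hy : y ∈ Icc (0:ℝ) 1) : S 0 y = 0 := by
  have h0 : (0:ℝ) ∈ Icc (0:ℝ) 1 := left_mem_Icc.2 zero_le_one
  have := hS.mono_right h0 hy (right_mem_Icc.2 zero_le_one) hy.2
  linarith [(hS.2.2.2 0 h0).1, (hS.mem_Icc h0 hy).1]

lemma zero_right (hS : Semicopula S) {x : ℝ} (hx : x ∈ Icc (0:ℝ) 1) : S x 0 = 0 := by
  have h0 : (0:ℝ) ∈ Icc (0:ℝ) 1 := left_mem_Icc.2 zero_le_one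
  have := hS.mono_left hx (right_mem_Icc.2 zero_le_one) h0 hx.2
  linarith [(hS.2.2.2 0 h0).2, (hS.mem_Icc hx h0).1]

end Semicopula

section genInt

variable {X : Type} {S : ℝ → ℝ → ℝ} {μ : Set X → ℝ}

lemma le_genInt (hS : Semicopula S) (hμ : Capacity μ) (f : X → ℝ) {t : ℝ}
    (ht : t ∈ Icc (0:ℝ) 1) : S t (μ {x | t ≤ f x}) ≤ genInt S μ f := by
  refine le_ciSup (f := fun t : Icc (0:ℝ) 1 => S t (μ {x | (t:ℝ) ≤ f x})) ⟨1, ?_⟩ ⟨t, ht⟩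
  rintro _ ⟨s, rfl⟩
  exact (hS.mem_Icc s.2 (hμ.1 _)).2

lemma genInt_nonneg (hS : Semicopula S) (hμ : Capacity μ) (f : X → ℝ) : 0 ≤ genInt S μ f :=
  (hS.mem_Icc (left_mem_Icc.2 zero_le_one) (hμ.1 _)).1.trans
    (le_genInt hS hμ f (left_mem_Icc.2 zero_le_one))

lemma setOf_le_indicator_const_of_le (A : Set X) {t c : ℝ} (ht : 0 < t) (htc : t ≤ c) :
    {x | t ≤ A.indicator (fun _ => c) x} = A := by
  ext x
  by_cases hx : x ∈ A <;> simp [hx, htc, ht.not_ge]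

lemma setOf_le_indicator_const_of_lt (A : Set X) {t c : ℝ} (ht : 0 < t) (hct : c < t) :
    {x | t ≤ A.indicator (fun _ => c) x} = ∅ := by
  ext x
  by_cases hx : x ∈ A <;> simp [hx, hct.not_ge, ht.not_ge]

theorem genInt_indicator_const (hS : Semicopula S) (hμ : Capacity μ) (A : Set X) {c : ℝ}
    (hc : c ∈ Icc (0:ℝ) 1) : genInt S μ (A.indicator fun _ => c) = S c (μ A) := by
  have hμA := hμ.1 A
  have hnonneg : 0 ≤ S c (μ A) := (hS.mem_Icc hc hμA).1
  apply le_antisymm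
  · refine ciSup_le fun ⟨t, ht⟩ => ?_
    obtain ht0 | hpos := ht.1.eq_or_lt
    · simpa [← ht0, hS.zero_left (hμ.1 _)] using hnonneg
    obtain htc | hct := le_or_gt t c
    · rw [setOf_le_indicator_const_of_le A hpos htc]
      exact hS.mono_left ht hc hμA htc
    · rw [setOf_le_indicator_const_of_lt A hpos hct, hμ.2.2.1, hS.zero_right ht]
      exact hnonneg
  · obtain hc0 | hpos := hc.1.eq_or_lt
    · rw [← hc0, hS.zero_left hμA]
      exact genInt_nonneg hS hμ _
    · simpa [setOf_le_indicator_const_of_le A hpos le_rfl] using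
        le_genInt hS hμ (A.indicator fun _ => c) hc

end genInt

noncomputable def threeValuedCapacity {X : Type} (A : Set X) (z : ℝ) : Set X → ℝ :=
  open Classical in fun B => if B = univ then 1 else if A ⊆ B then z else 0

lemma capacity_threeValuedCapacity {X : Type} {A : Set X} (hA : A.Nonempty) {z : ℝ}
    (hz : z ∈ Icc (0:ℝ) 1) : Capacity (threeValuedCapacity A z) := by
  classical
  have hrange : ∀ B, threeValuedCapacity A z B ∈ Icc (0:ℝ) 1 := by
    intro B
    unfold threeValuedCapacity
    split_ifs <;> simp [hz.1, hz.2]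
  refine ⟨hrange, fun B C hBC => ?_, ?_, ?_⟩
  · by_cases hC : C = univ
    · simpa [threeValuedCapacity, hC] using (hrange B).2
    have hB : B ≠ univ := fun hB => hC (univ_subset_iff.1 (hB ▸ hBC))
    by_cases hAB : A ⊆ B
    · simp [threeValuedCapacity, hB, hC, hAB, hAB.trans hBC]
    · simpa [threeValuedCapacity, hB, hAB] using (hrange C).1
  · have : Nonempty X := ⟨hA.some⟩
    simp [threeValuedCapacity, hA.ne_empty, empty_ne_univ]
  · simp [threeValuedCapacity]

lemma threeValuedCapacity_self {X : Type} {A : Set X} (hA : A ≠ univ) (z : ℝ) :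
    threeValuedCapacity A z A = z := by
  classical
  simp [threeValuedCapacity, hA]

lemma setOf_le_indicator_add_const_subset {X : Type} (A : Set X) {f : X → ℝ}
    (hf : ∀ x, 0 ≤ f x) {a : ℝ} (ha : 0 ≤ a) (t : ℝ) :
    {x | t ≤ A.indicator (fun x => f x + a) x} ⊆
      {x | t - min t a ≤ A.indicator f x} ∩ {x | min t a ≤ A.indicator (fun _ => a) x} := by
  intro x hx
  by_cases hxA : x ∈ A
  · simp only [mem_ofPred_eq, indicator_of_mem hxA] at hx
    simp only [mem_inter_iff, mem_ofPred_eq, indicator_of_mem hxA, min_le_right, and_true]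
    rcases min_cases t a with ⟨hmin, -⟩ | ⟨hmin, -⟩ <;> linarith [hf x]
  · simp only [mem_ofPred_eq, indicator_of_notMem hxA] at hx
    simp only [mem_inter_iff, mem_ofPred_eq, indicator_of_notMem hxA, min_eq_left (hx.trans ha)]
    exact ⟨(sub_self t).le, hx⟩

theorem genInt_indicator_add_const_le {X : Type} {S₁ S₂ S₃ : ℝ → ℝ → ℝ} {μ : Set X → ℝ}
    (h₂ : Semicopula S₂) (h₃ : Semicopula S₃)
    (hsub : ∀ x ∈ Icc (0:ℝ) 1, ∀ y ∈ Icc (0:ℝ) 1, ∀ z ∈ Icc (0:ℝ) 1, x + y ≤ 1 →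
      S₁ (x + y) z ≤ S₂ x z + S₃ y z)
    (hμ : Capacity μ) (A : Set X) {f : X → ℝ} (hf : ∀ x, 0 ≤ f x) {a : ℝ} (ha : 0 ≤ a) :
    genInt S₁ μ (A.indicator fun x => f x + a) ≤
      genInt S₂ μ (A.indicator f) + genInt S₃ μ (A.indicator fun _ => a) := by
  refine ciSup_le fun ⟨t, ht⟩ => ?_
  set s := min t a
  set r := t - s
  have hs : s ∈ Icc (0:ℝ) 1 := ⟨le_min ht.1 ha, (min_le_left _ _).trans ht.2⟩
  have hr : r ∈ Icc (0:ℝ) 1 := ⟨sub_nonneg.2 (min_le_left _ _), by linarith [hs.1, ht.2]⟩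
  obtain ⟨hsub₂, hsub₃⟩ := subset_inter_iff.1 (setOf_le_indicator_add_const_subset A hf ha t)
  set w := μ {x | t ≤ A.indicator (fun x => f x + a) x}
  have hw : w ∈ Icc (0:ℝ) 1 := hμ.1 _
  calc S₁ t w = S₁ (r + s) w := by rw [sub_add_cancel]
    _ ≤ S₂ r w + S₃ s w := hsub r hr s hs w hw (by rw [sub_add_cancel]; exact ht.2)
    _ ≤ S₂ r (μ {x | r ≤ A.indicator f x}) + S₃ s (μ {x | s ≤ A.indicator (fun _ => a) x}) :=
        add_le_add (h₂.mono_right hr hw (hμ.1 _) (hμ.2.1 _ _ hsub₂))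
          (h₃.mono_right hs hw (hμ.1 _) (hμ.2.1 _ _ hsub₃))
    _ ≤ genInt S₂ μ (A.indicator f) + genInt S₃ μ (A.indicator fun _ => a) :=
        add_le_add (le_genInt h₂ hμ _ hr) (le_genInt h₃ hμ _ hs)

theorem stmt2 (S1 S2 S3 : ℝ → ℝ → ℝ)
    (h1 : Semicopula S1) (h2 : Semicopula S2) (h3 : Semicopula S3) :
    (∀ (X : Type) (μ : Set X → ℝ), Capacity μ → ∀ (A : Set X) (f : X → ℝ),
        (∀ x, f x ∈ Icc (0:ℝ) 1) → ∀ a ∈ Icc (0:ℝ) 1,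
        (∀ x, f x + a ∈ Icc (0:ℝ) 1) →
        genInt S1 μ (A.indicator (fun x => f x + a)) ≤
          genInt S2 μ (A.indicator f) + genInt S3 μ (A.indicator (fun _ => a))) ↔
    (∀ x ∈ Icc (0:ℝ) 1, ∀ y ∈ Icc (0:ℝ) 1, ∀ z ∈ Icc (0:ℝ) 1, x + y ≤ 1 →
        S1 (x + y) z ≤ S2 x z + S3 y z) := by
  constructor
  · intro h x hx y hy z hz hxy
    have hxy' : x + y ∈ Icc (0:ℝ) 1 := ⟨add_nonneg hx.1 hy.1, hxy⟩
    have hA : ({true} : Set Bool) ≠ univ := (ne_univ_iff_exists_notMem _).2 ⟨false, by simp⟩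
    have hμ := capacity_threeValuedCapacity (singleton_nonempty true) hz
    have key : genInt S1 _ (({true} : Set Bool).indicator fun _ => x + y) ≤
        genInt S2 _ (indicator {true} fun _ => x) + genInt S3 _ (indicator {true} fun _ => y) :=
      h Bool _ hμ {true} (fun _ => x) (fun _ => hx) y hy (fun _ => hxy')
    rwa [genInt_indicator_const h1 hμ _ hxy', genInt_indicator_const h2 hμ _ hx,
      genInt_indicator_const h3 hμ _ hy, threeValuedCapacity_self hA] at key
  · intro h X μ hμ A f hf a ha _
    exact genInt_indicator_add_const_le h2 h3 h hμ A (fun x => (hf x).1) ha.1
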